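/- Restricted to [0,1), the periodized sums Σ_{k∈ℤ} χ_E((3/2)(ξ+k)) = 2·χ_{[1/3,2/3)}(ξ) and Σ_{k∈ℤ} χ_E(3(ξ+k)) = χ_{[1/6,1/3)}(ξ) + χ_{[2/3,5/6)}(ξ), where E = [−1,−1/2) ∪ [1/2,1). In particular these two sums have disjoint supports in [0,1). -/

import Mathlib

/-!
Since `E ⊆ [-1, 1)`, for `c ≥ 1` and `ξ ∈ [0, 1)` only the terms `k = -1` and `k = 0` of
`Σ_k χ_E(c(ξ + k))` can be nonzero. The point `c(ξ - 1)` is negative and `cξ` is nonnegative, so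
they can only meet the left, resp. right, half of `E`; hence the sum is
`χ_{[1 - 1/c, 1 - 1/(2c))}(ξ) + χ_{[1/(2c), 1/c)}(ξ)`. For `c = 3/2` both intervals are
`[1/3, 2/3)`, for `c = 3` they are `[2/3, 5/6)` and `[1/6, 1/3)`.
-/

open MeasureTheory ENNReal

noncomputable section

def shannonSet : Set ℝ := Set.Ico (-1 : ℝ) (-(1/2)) ∪ Set.Ico (1/2 : ℝ) 1

lemma mul_mem_Ico_iff {a b c x : ℝ} (hc : 0 < c) :
    c * x ∈ Set.Ico a b ↔ x ∈ Set.Ico (a / c) (b / c) := by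
  rw [← Set.preimage_const_mul_Ico₀ a b hc, Set.mem_preimage]

lemma mul_sub_one_mem_shannonSet_iff {c ξ : ℝ} (hc : 0 < c) (hξ : ξ < 1) :
    c * (ξ - 1) ∈ shannonSet ↔ ξ ∈ Set.Ico (-1 / c + 1) (-(1 / 2) / c + 1) := by
  have hneg : ¬ c * (ξ - 1) ∈ Set.Ico (1 / 2 : ℝ) 1 :=
    fun h => (mul_neg_of_pos_of_neg hc (sub_neg.2 hξ)).not_ge (by linarith [h.1])
  rw [shannonSet, Set.mem_union, or_iff_left hneg, mul_mem_Ico_iff hc,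
    ← Set.preimage_sub_const_Ico, Set.mem_preimage]

lemma mul_mem_shannonSet_iff {c ξ : ℝ} (hc : 0 < c) (hξ : 0 ≤ ξ) :
    c * ξ ∈ shannonSet ↔ ξ ∈ Set.Ico (1 / 2 / c) (1 / c) := by
  have hpos : ¬ c * ξ ∈ Set.Ico (-1 : ℝ) (-(1 / 2)) :=
    fun h => (mul_nonneg hc.le hξ).not_gt (by linarith [h.2])
  rw [shannonSet, Set.mem_union, or_iff_right hpos, mul_mem_Ico_iff hc]

lemma mul_add_int_notMem_shannonSet {c ξ : ℝ} (hc : 1 ≤ c) (hξ₀ : 0 ≤ ξ) (hξ₁ : ξ < 1)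
    {k : ℤ} (hk : k ∉ ({-1, 0} : Finset ℤ)) : c * (ξ + k) ∉ shannonSet := by
  have hk' : (1 : ℝ) ≤ k ∨ (k : ℝ) ≤ -2 := by
    simp only [Finset.mem_insert, Finset.mem_singleton] at hk
    rcases (by omega : 1 ≤ k ∨ k ≤ -2) with h | h
    exacts [.inl (by exact_mod_cast h), .inr (by exact_mod_cast h)]
  rintro (⟨h₁, h₂⟩ | ⟨h₁, h₂⟩) <;> rcases hk' with h | h <;> nlinarith

lemma tsum_indicator_shannonSet_mul_add_int {c ξ : ℝ} (hc : 1 ≤ c) (hξ₀ : 0 ≤ ξ) (hξ₁ : ξ < 1) :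
    ∑' k : ℤ, shannonSet.indicator (fun _ => (1 : ℝ≥0∞)) (c * (ξ + k)) =
      (Set.Ico (-1 / c + 1) (-(1 / 2) / c + 1)).indicator (fun _ => 1) ξ +
        (Set.Ico (1 / 2 / c) (1 / c)).indicator (fun _ => 1) ξ := by
  have hc₀ : 0 < c := by linarith
  rw [tsum_eq_sum (s := {-1, 0})
    (fun k hk => Set.indicator_of_notMem (mul_add_int_notMem_shannonSet hc hξ₀ hξ₁ hk) _),
    Finset.sum_pair (by decide)]
  push_cast
  rw [← sub_eq_add_neg, add_zero]
  classical
  simp only [Set.indicator_apply, mul_sub_one_mem_shannonSet_iff hc₀ hξ₁,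
    mul_mem_shannonSet_iff hc₀ hξ₀]

/-- restricted to `[0,1)`, `Σ_k χ_E((3/2)(ξ+k)) = 2·χ_{[1/3,2/3)}(ξ)` and
`Σ_k χ_E(3(ξ+k)) = χ_{[1/6,1/3)}(ξ) + χ_{[2/3,5/6)}(ξ)`, where `E = [−1,−1/2) ∪ [1/2,1)`;
in particular the two sums have disjoint supports in `[0,1)`. -/
theorem stmt15 :
    (∀ ξ ∈ Set.Ico (0 : ℝ) 1,
      ∑' k : ℤ, shannonSet.indicator (fun _ => (1 : ℝ≥0∞)) ((3/2) * (ξ + (k : ℝ))) =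
        2 * (Set.Ico (1/3 : ℝ) (2/3)).indicator (fun _ => (1 : ℝ≥0∞)) ξ) ∧
    (∀ ξ ∈ Set.Ico (0 : ℝ) 1,
      ∑' k : ℤ, shannonSet.indicator (fun _ => (1 : ℝ≥0∞)) (3 * (ξ + (k : ℝ))) =
        (Set.Ico (1/6 : ℝ) (1/3)).indicator (fun _ => (1 : ℝ≥0∞)) ξ +
          (Set.Ico (2/3 : ℝ) (5/6)).indicator (fun _ => (1 : ℝ≥0∞)) ξ) ∧
    (∀ ξ ∈ Set.Ico (0 : ℝ) 1,
      (∑' k : ℤ, shannonSet.indicator (fun _ => (1 : ℝ≥0∞)) ((3/2) * (ξ + (k : ℝ)))) = 0 ∨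
      (∑' k : ℤ, shannonSet.indicator (fun _ => (1 : ℝ≥0∞)) (3 * (ξ + (k : ℝ)))) = 0) := by
  have h₁ : ∀ ξ ∈ Set.Ico (0 : ℝ) 1,
      ∑' k : ℤ, shannonSet.indicator (fun _ => (1 : ℝ≥0∞)) ((3/2) * (ξ + (k : ℝ))) =
        2 * (Set.Ico (1/3 : ℝ) (2/3)).indicator (fun _ => (1 : ℝ≥0∞)) ξ := by
    rintro ξ ⟨hξ₀, hξ₁⟩
    rw [tsum_indicator_shannonSet_mul_add_int (by norm_num) hξ₀ hξ₁, two_mul]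
    norm_num
  have h₂ : ∀ ξ ∈ Set.Ico (0 : ℝ) 1,
      ∑' k : ℤ, shannonSet.indicator (fun _ => (1 : ℝ≥0∞)) (3 * (ξ + (k : ℝ))) =
        (Set.Ico (1/6 : ℝ) (1/3)).indicator (fun _ => (1 : ℝ≥0∞)) ξ +
          (Set.Ico (2/3 : ℝ) (5/6)).indicator (fun _ => (1 : ℝ≥0∞)) ξ := by
    rintro ξ ⟨hξ₀, hξ₁⟩
    rw [tsum_indicator_shannonSet_mul_add_int (by norm_num) hξ₀ hξ₁, add_comm]
    norm_num
  refine ⟨h₁, h₂, fun ξ hξ => ?_⟩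
  rw [h₁ ξ hξ, h₂ ξ hξ]
  by_cases hmid : ξ ∈ Set.Ico (1/3 : ℝ) (2/3)
  · right
    rw [Set.indicator_of_notMem (fun h => hmid.1.not_gt h.2),
      Set.indicator_of_notMem (fun h => hmid.2.not_ge h.1), add_zero]
  · left
    rw [Set.indicator_of_notMem hmid, mul_zero]
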